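/- arXiv:1811.10727 — 3 statements merged into one kernel-verified Lean document; each statement's English description precedes it below -/
import Mathlib

section
/- Let F : ℝⁿ → ℝ be continuous with F(y + m) = F(y) for all y ∈ ℝⁿ and all m ∈ ℤⁿ, let L : ℝᵏ → ℝⁿ be a linear map, and let y₀ ∈ ℝⁿ be such that for every δ > 0 there exist t ∈ ℝᵏ and m ∈ ℤⁿ with ‖L t + m − y₀‖ < δ. Then for every ε > 0 there exists t_ε ∈ ℝᵏ such that sup over x ∈ ℝᵏ of |F(L(x + t_ε)) − F(L x + y₀)| < ε. -/
/-- A continuous ℤⁿ-periodic function on ℝⁿ is uniformly continuous. -/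
lemma periodic_unifcont (n : ℕ) (F : (Fin n → ℝ) → ℝ) (hF : Continuous F)
    (hper : ∀ (y : Fin n → ℝ) (m : Fin n → ℤ), F (y + fun i => (m i : ℝ)) = F y) :
    ∀ ε > (0 : ℝ), ∃ δ > (0 : ℝ), ∀ a b : Fin n → ℝ, dist a b < δ →
      dist (F a) (F b) < ε := by
  intro ε hε
  have hK : IsCompact (Metric.closedBall (0 : Fin n → ℝ) 2) :=
    isCompact_closedBall _ _
  have hUC : UniformContinuousOn F (Metric.closedBall (0 : Fin n → ℝ) 2) :=
    hK.uniformContinuousOn_of_continuous hF.continuousOn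
  rw [Metric.uniformContinuousOn_iff] at hUC
  obtain ⟨δ, hδ, hδ'⟩ := hUC ε hε
  refine ⟨min δ 1, by positivity, fun a b hab => ?_⟩
  set m : Fin n → ℤ := fun i => ⌊a i⌋ with hm
  set a' : Fin n → ℝ := a - fun i => (m i : ℝ) with ha'
  set b' : Fin n → ℝ := b - fun i => (m i : ℝ) with hb'
  have keya : a' + (fun i => (m i : ℝ)) = a := by rw [ha']; exact sub_add_cancel a _
  have keyb : b' + (fun i => (m i : ℝ)) = b := by rw [hb']; exact sub_add_cancel b _
  have hFa : F a' = F a := (hper a' m).symm.trans (congrArg F keya)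
  have hFb : F b' = F b := (hper b' m).symm.trans (congrArg F keyb)
  have ha'norm : ‖a'‖ ≤ 1 := by
    rw [pi_norm_le_iff_of_nonneg (by norm_num)]
    intro i
    have h1 : a' i = Int.fract (a i) := rfl
    rw [Real.norm_eq_abs, h1, abs_of_nonneg (Int.fract_nonneg _)]
    exact (Int.fract_lt_one _).le
  have ha'mem : a' ∈ Metric.closedBall (0 : Fin n → ℝ) 2 := by
    rw [Metric.mem_closedBall, dist_zero_right]
    linarith
  have hb'mem : b' ∈ Metric.closedBall (0 : Fin n → ℝ) 2 := by
    rw [Metric.mem_closedBall, dist_zero_right]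
    have : ‖b'‖ ≤ ‖b - a‖ + ‖a'‖ := by
      have : b' = (b - a) + a' := by rw [ha', hb']; ring
      rw [this]; exact norm_add_le _ _
    have hba : ‖b - a‖ < 1 := by
      rw [← dist_eq_norm, dist_comm]
      exact lt_of_lt_of_le hab (min_le_right _ _)
    linarith
  have hdist : dist a' b' < δ := by
    have : dist a' b' = dist a b := by
      rw [dist_eq_norm, dist_eq_norm, ha', hb']
      congr 1; ring
    rw [this]
    exact lt_of_lt_of_le hab (min_le_left _ _)
  have := hδ' a' ha'mem b' hb'mem hdist
  rwa [hFa, hFb] at this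

/-- Quasiperiodic functions induced by sibling planes are almost translates of
each other. -/
theorem stmt_2 (n k : ℕ) (F : (Fin n → ℝ) → ℝ) (hF : Continuous F)
    (hper : ∀ (y : Fin n → ℝ) (m : Fin n → ℤ), F (y + fun i => (m i : ℝ)) = F y)
    (L : (Fin k → ℝ) →ₗ[ℝ] (Fin n → ℝ)) (y₀ : Fin n → ℝ)
    (hy₀ : ∀ δ > (0 : ℝ), ∃ (t : Fin k → ℝ) (m : Fin n → ℤ),
      ‖L t + (fun i => (m i : ℝ)) - y₀‖ < δ) :
    ∀ ε > (0 : ℝ), ∃ tε : Fin k → ℝ, ∀ x : Fin k → ℝ,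
      |F (L (x + tε)) - F (L x + y₀)| < ε := by
  intro ε hε
  obtain ⟨δ, hδ, hδ'⟩ := periodic_unifcont n F hF hper ε hε
  obtain ⟨t, m, htm⟩ := hy₀ δ hδ
  refine ⟨t, fun x => ?_⟩
  have h1 : F (L (x + t)) = F (L x + L t + fun i => (m i : ℝ)) := by
    rw [map_add, hper]
  rw [h1, ← Real.dist_eq]
  apply hδ'
  rw [dist_eq_norm]
  have : (L x + L t + fun i => (m i : ℝ)) - (L x + y₀)
      = L t + (fun i => (m i : ℝ)) - y₀ := by ring
  rw [this]
  exact htm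
end

section
/- Let 𝔠 : ℝ³ → ℝ be defined by 𝔠(x, y, z) = cos(2πx) + cos(2πy) + cos(2πz), and let c ∈ ℝ satisfy 1 < |c| < 3. Then every connected component of the level set {p ∈ ℝ³ : 𝔠(p) = c} is a bounded subset of ℝ³. -/
open Real

/-- The triply periodic function `𝔠(x,y,z) = cos 2πx + cos 2πy + cos 2πz`. -/
noncomputable def frakc (p : ℝ × ℝ × ℝ) : ℝ :=
  Real.cos (2 * π * p.1) + Real.cos (2 * π * p.2.1) + Real.cos (2 * π * p.2.2)

lemma exists_cos_eq_neg_one (x : ℝ) :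
    ∃ t ∈ Set.Icc x (x + 1), Real.cos (2 * π * t) = -1 := by
  refine ⟨(⌈x - 1/2⌉ : ℝ) + 1/2, ⟨?_, ?_⟩, ?_⟩
  · have := Int.le_ceil (x - 1/2); linarith
  · have := Int.ceil_lt_add_one (x - 1/2); linarith
  · rw [show 2 * π * ((⌈x - 1/2⌉ : ℝ) + 1/2) = (⌈x - 1/2⌉ : ℝ) * (2 * π) + π by ring]
    exact Real.cos_int_mul_two_pi_add_pi _

lemma exists_cos_eq_one (x : ℝ) :
    ∃ t ∈ Set.Icc x (x + 1), Real.cos (2 * π * t) = 1 := by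
  refine ⟨(⌈x⌉ : ℝ), ⟨Int.le_ceil x, le_of_lt (Int.ceil_lt_add_one x)⟩, ?_⟩
  rw [show 2 * π * (⌈x⌉ : ℝ) = (⌈x⌉ : ℝ) * (2 * π) by ring]
  exact Real.cos_int_mul_two_pi _

lemma narrow_of_avoid (v : ℝ) (hv : ∀ x : ℝ, ∃ t ∈ Set.Icc x (x + 1), Real.cos (2 * π * t) = v)
    (s : Set ℝ) (hs : IsPreconnected s) (x₀ : ℝ) (hx₀ : x₀ ∈ s)
    (hbad : ∀ y ∈ s, Real.cos (2 * π * y) ≠ v) : ∀ y ∈ s, |y - x₀| < 1 := by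
  intro y hy
  by_contra h
  push_neg at h
  have hoc : s.OrdConnected := hs.ordConnected
  rcases le_or_gt x₀ y with hle | hlt
  · have h1 : x₀ + 1 ≤ y := by
      have : |y - x₀| = y - x₀ := abs_of_nonneg (by linarith)
      linarith [this ▸ h]
    obtain ⟨t, ⟨ht1, ht2⟩, htv⟩ := hv x₀
    exact hbad t (hoc.out hx₀ hy ⟨ht1, by linarith⟩) htv
  · have h1 : y + 1 ≤ x₀ := by
      have : |y - x₀| = -(y - x₀) := abs_of_nonpos (by linarith)
      linarith [this ▸ h]
    obtain ⟨t, ⟨ht1, ht2⟩, htv⟩ := hv y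
    exact hbad t (hoc.out hy hx₀ ⟨ht1, by linarith⟩) htv

/-- For `1 < |c| < 3`, every connected component of the level set `{𝔠 = c}`
is bounded. -/
theorem stmt_13 (c : ℝ) (hc1 : 1 < |c|) (hc3 : |c| < 3) :
    ∀ p ∈ {q : ℝ × ℝ × ℝ | frakc q = c},
      Bornology.IsBounded (connectedComponentIn {q : ℝ × ℝ × ℝ | frakc q = c} p) := by
  intro p hp
  set S := {q : ℝ × ℝ × ℝ | frakc q = c} with hS
  set C := connectedComponentIn S p with hCdef
  have hpC : p ∈ C := mem_connectedComponentIn hp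
  have hC : IsPreconnected C := (isPreconnected_connectedComponentIn)
  have hsub : C ⊆ S := connectedComponentIn_subset S p
  -- choose the forbidden cosine value
  obtain ⟨v, hv, hbad⟩ :
      ∃ v : ℝ, (∀ x : ℝ, ∃ t ∈ Set.Icc x (x + 1), Real.cos (2 * π * t) = v) ∧
        ∀ q ∈ S, Real.cos (2 * π * q.1) ≠ v ∧ Real.cos (2 * π * q.2.1) ≠ v ∧
          Real.cos (2 * π * q.2.2) ≠ v := by
    rcases lt_abs.mp hc1 with h | h
    · refine ⟨-1, exists_cos_eq_neg_one, fun q hq => ?_⟩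
      have hq' : Real.cos (2 * π * q.1) + Real.cos (2 * π * q.2.1) +
          Real.cos (2 * π * q.2.2) = c := hq
      have b1 := Real.cos_le_one (2 * π * q.1)
      have b2 := Real.cos_le_one (2 * π * q.2.1)
      have b3 := Real.cos_le_one (2 * π * q.2.2)
      exact ⟨by intro hv'; linarith [hv' ▸ hq'], by intro hv'; linarith,
        by intro hv'; linarith⟩
    · have hcneg : c < -1 := by linarith
      refine ⟨1, exists_cos_eq_one, fun q hq => ?_⟩
      have hq' : Real.cos (2 * π * q.1) + Real.cos (2 * π * q.2.1) +
          Real.cos (2 * π * q.2.2) = c := hq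
      have b1 := Real.neg_one_le_cos (2 * π * q.1)
      have b2 := Real.neg_one_le_cos (2 * π * q.2.1)
      have b3 := Real.neg_one_le_cos (2 * π * q.2.2)
      exact ⟨by intro hv'; linarith, by intro hv'; linarith, by intro hv'; linarith⟩
  -- each coordinate projection of C is narrow
  have key : ∀ (f : ℝ × ℝ × ℝ → ℝ), Continuous f →
      (∀ q ∈ S, Real.cos (2 * π * f q) ≠ v) → ∀ q ∈ C, |f q - f p| < 1 := by
    intro f hf hbadf q hq
    have himg : IsPreconnected (f '' C) := hC.image f hf.continuousOn
    have := narrow_of_avoid v hv (f '' C) himg (f p) ⟨p, hpC, rfl⟩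
      (by rintro y ⟨q', hq', rfl⟩; exact hbadf q' (hsub hq'))
    exact this (f q) ⟨q, hq, rfl⟩
  have k1 := key (fun q => q.1) continuous_fst (fun q hq => (hbad q hq).1)
  have k2 := key (fun q => q.2.1) (continuous_fst.comp continuous_snd)
    (fun q hq => (hbad q hq).2.1)
  have k3 := key (fun q => q.2.2) (continuous_snd.comp continuous_snd)
    (fun q hq => (hbad q hq).2.2)
  have hBsub : C ⊆ Metric.ball p.1 1 ×ˢ (Metric.ball p.2.1 1 ×ˢ Metric.ball p.2.2 1) := by
    intro q hq
    refine ⟨?_, ?_, ?_⟩ <;> simp only [Metric.mem_ball, Real.dist_eq]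
    · exact k1 q hq
    · exact k2 q hq
    · exact k3 q hq
  exact (Metric.isBounded_ball.prod (Metric.isBounded_ball.prod Metric.isBounded_ball)).subset hBsub
end

section
/- Let F : ℝⁿ → ℝ be continuous with F(y + m) = F(y) for all y ∈ ℝⁿ and all m ∈ ℤⁿ, let α ∈ ℝⁿ, and define g : ℝ → ℝ by g(t) = F(t·α). Then for every ε > 0 the set of ε-almost-periods of g is relatively dense: there exists ℓ > 0 such that every interval of length ℓ in ℝ contains a number τ with |g(t + τ) − g(t)| ≤ ε for all t ∈ ℝ. -/
/-- A continuous `ℤⁿ`-periodic function is uniformly continuous. -/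
lemma aux_unif (n : ℕ) (F : (Fin n → ℝ) → ℝ) (hF : Continuous F)
    (hper : ∀ (y : Fin n → ℝ) (m : Fin n → ℤ), F (y + fun i => (m i : ℝ)) = F y)
    {ε : ℝ} (hε : 0 < ε) :
    ∃ δ > (0 : ℝ), ∀ x y : Fin n → ℝ, dist x y ≤ δ → |F x - F y| ≤ ε := by
  have hK : IsCompact (Metric.closedBall (0 : Fin n → ℝ) 2) := isCompact_closedBall _ _
  have hUC := hK.uniformContinuousOn_of_continuous hF.continuousOn
  obtain ⟨δ, hδ, hδ'⟩ := Metric.uniformContinuousOn_iff.mp hUC ε hε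
  refine ⟨min δ 1 / 2, by positivity, fun x y hxy => ?_⟩
  set m : Fin n → ℤ := fun i => ⌊x i⌋ with hm
  set x' : Fin n → ℝ := x - fun i => (m i : ℝ) with hx'
  set y' : Fin n → ℝ := y - fun i => (m i : ℝ) with hy'
  have hFx : F x = F x' := by rw [← hper x' m]; congr 1; simp [hx']
  have hFy : F y = F y' := by rw [← hper y' m]; congr 1; simp [hy']
  have hx'mem : x' ∈ Metric.closedBall (0 : Fin n → ℝ) 2 := by
    rw [Metric.mem_closedBall, dist_zero_right]
    refine pi_norm_le_iff_of_nonneg (by norm_num) |>.mpr fun i => ?_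
    have h1 : (m i : ℝ) ≤ x i := Int.floor_le _
    have h2 : x i < m i + 1 := Int.lt_floor_add_one _
    simp only [hx', Pi.sub_apply, Real.norm_eq_abs]
    rw [abs_le]; constructor <;> nlinarith
  have hy'mem : y' ∈ Metric.closedBall (0 : Fin n → ℝ) 2 := by
    rw [Metric.mem_closedBall, dist_zero_right]
    refine pi_norm_le_iff_of_nonneg (by norm_num) |>.mpr fun i => ?_
    have h1 : (m i : ℝ) ≤ x i := Int.floor_le _
    have h2 : x i < m i + 1 := Int.lt_floor_add_one _
    have h3 : dist (x i) (y i) ≤ dist x y := dist_le_pi_dist x y i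
    have h4 : dist x y ≤ 1 := le_trans hxy (by
      have := min_le_right δ 1; linarith)
    rw [Real.dist_eq] at h3
    simp only [hy', Pi.sub_apply, Real.norm_eq_abs]
    have : |y i - x i| ≤ 1 := by rw [abs_sub_comm]; linarith
    rw [abs_le] at this ⊢; constructor <;> nlinarith
  have hd : dist x' y' = dist x y := dist_sub_right x y _
  have : dist x' y' < δ := by
    rw [hd]
    have := min_le_left δ 1
    linarith
  have := hδ' x' hx'mem y' hy'mem this
  rw [Real.dist_eq] at this
  rw [hFx, hFy]
  linarith

/-- Return times of the linear flow to a small neighborhood of `0` in the torus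
are relatively dense. -/
lemma aux_synd (n : ℕ) (α : Fin n → ℝ) {δ : ℝ} (hδ : 0 < δ) :
    ∃ ℓ > (0 : ℝ), ∀ a : ℝ, ∃ τ ∈ Set.Icc a (a + ℓ),
      ∀ i, |τ * α i - round (τ * α i)| < δ := by
  classical
  let φ : ℝ → (Fin n → AddCircle (1 : ℝ)) := fun t i => ((t * α i : ℝ) : AddCircle (1:ℝ))
  have hφc : Continuous φ := by
    refine continuous_pi fun i => ?_
    exact (AddCircle.continuous_mk' 1).comp (continuous_id.mul continuous_const)
  have hφadd : ∀ s t, φ (s + t) = φ s + φ t := by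
    intro s t; funext i
    show (((s + t) * α i : ℝ) : AddCircle (1:ℝ)) = _
    rw [add_mul]
    exact AddCircle.coe_add (p := (1:ℝ)) _ _
  have hφ0 : φ 0 = 0 := by
    funext i; show (((0:ℝ) * α i : ℝ) : AddCircle (1:ℝ)) = _
    rw [zero_mul]; rfl
  have hφsub : ∀ s t, φ (s - t) = φ s - φ t := by
    intro s t
    have := hφadd (s - t) t
    rw [sub_add_cancel] at this
    rw [this]; abel
  have hφneg : ∀ t, φ (-t) = - φ t := by
    intro t
    have := hφsub 0 t
    rw [zero_sub, hφ0, zero_sub] at this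
    exact this
  -- the open set U
  let U : Set (Fin n → AddCircle (1:ℝ)) := {x | ∀ i, ‖x i‖ < δ}
  have hUopen : IsOpen U := by
    have : U = ⋂ i, (fun x : Fin n → AddCircle (1:ℝ) => x i) ⁻¹' {y | ‖y‖ < δ} := by
      ext x; simp [U]
    rw [this]
    exact isOpen_iInter_of_finite fun i =>
      (isOpen_lt (continuous_norm.comp (continuous_apply i)) continuous_const)
  have hU0 : (0 : Fin n → AddCircle (1:ℝ)) ∈ U := by
    intro i; simp [hδ]
  -- compact closure of the orbit
  let H := closure (Set.range φ)
  have hHcomp : IsCompact H := isClosed_closure.isCompact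
  -- cover
  have hcover : H ⊆ ⋃ t : ℝ, {x | x - φ t ∈ U} := by
    intro h hh
    have : ({x | h - x ∈ U} ∩ Set.range φ).Nonempty := by
      have hopen : IsOpen {x : Fin n → AddCircle (1:ℝ) | h - x ∈ U} :=
        hUopen.preimage (continuous_const.sub continuous_id)
      have hmem : h ∈ {x : Fin n → AddCircle (1:ℝ) | h - x ∈ U} := by
        simp only [Set.mem_setOf_eq, sub_self]; exact hU0
      exact mem_closure_iff.mp hh _ hopen hmem
    obtain ⟨x, hx1, t, ht⟩ := this
    subst ht
    refine Set.mem_iUnion.mpr ⟨t, ?_⟩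
    simp only [Set.mem_setOf_eq] at hx1 ⊢
    intro i
    have := hx1 i
    rwa [show (h - φ t) i = -((φ t - h) i) by simp, norm_neg] at this ⊢
  obtain ⟨s, hs⟩ := hHcomp.elim_finite_subcover (fun t : ℝ => {x | x - φ t ∈ U})
    (fun t => hUopen.preimage (continuous_id.sub continuous_const)) hcover
  have hne : s.Nonempty := by
    by_contra h
    have h0 : φ 0 ∈ H := subset_closure ⟨0, rfl⟩
    have := hs h0
    rw [Finset.not_nonempty_iff_eq_empty.mp h] at this
    simpa using this
  set tmin := s.min' hne with htmin
  set tmax := s.max' hne with htmax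
  have hminmax : tmin ≤ tmax := s.min'_le _ (s.max'_mem hne)
  refine ⟨tmax - tmin + 1, by linarith, fun a => ?_⟩
  have hmemH : φ (tmin - a) ∈ H := subset_closure ⟨tmin - a, rfl⟩
  obtain ⟨t, ht, htU⟩ := Set.mem_iUnion₂.mp (hs hmemH)
  refine ⟨a - tmin + t, ?_, fun i => ?_⟩
  · constructor
    · have := s.min'_le t ht
      linarith
    · have := s.le_max' t ht
      linarith
  · have h1 : φ (tmin - a) - φ t = -φ (a - tmin + t) := by
      rw [← hφsub, ← hφneg]
      congr 1; ring
    have htU' : φ (tmin - a) - φ t ∈ U := htU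
    rw [h1] at htU'
    have h2 := htU' i
    rw [Pi.neg_apply, norm_neg] at h2
    have h3 : φ (a - tmin + t) i = (((a - tmin + t) * α i : ℝ) : AddCircle (1:ℝ)) := rfl
    rw [h3, AddCircle.norm_eq] at h2
    simpa using h2

/-- A quasiperiodic function in one variable, i.e. the restriction
`g(t) = F(t • α)` of a continuous `ℤⁿ`-periodic function `F` to a line, is
Bohr almost periodic: for every `ε > 0`, the set of its `ε`-almost-periods is
relatively dense. -/
theorem stmt_14 (n : ℕ) (F : (Fin n → ℝ) → ℝ) (hF : Continuous F)
    (hper : ∀ (y : Fin n → ℝ) (m : Fin n → ℤ), F (y + fun i => (m i : ℝ)) = F y)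
    (α : Fin n → ℝ) :
    ∀ ε > (0 : ℝ), ∃ ℓ > (0 : ℝ), ∀ a : ℝ, ∃ τ ∈ Set.Icc a (a + ℓ),
      ∀ t : ℝ, |F ((t + τ) • α) - F (t • α)| ≤ ε := by
  intro ε hε
  obtain ⟨δ, hδ, hδ'⟩ := aux_unif n F hF hper hε
  obtain ⟨ℓ, hℓ, hℓ'⟩ := aux_synd n α hδ
  refine ⟨ℓ, hℓ, fun a => ?_⟩
  obtain ⟨τ, hτmem, hτ⟩ := hℓ' a
  refine ⟨τ, hτmem, fun t => ?_⟩
  set m : Fin n → ℤ := fun i => round (τ * α i) with hm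
  set v : Fin n → ℝ := τ • α - fun i => (m i : ℝ) with hv
  have key : (t + τ) • α = (t • α + v) + fun i => (m i : ℝ) := by
    rw [add_smul]; funext i; simp [hv]; ring
  have hFeq : F ((t + τ) • α) = F (t • α + v) := by rw [key, hper]
  rw [hFeq]
  refine hδ' _ _ ?_
  have : dist (t • α + v) (t • α) = ‖v‖ := by
    rw [dist_eq_norm]; congr 1; abel
  rw [this]
  refine pi_norm_le_iff_of_nonneg hδ.le |>.mpr fun i => ?_
  simp only [hv, Pi.sub_apply, Pi.smul_apply, smul_eq_mul, Real.norm_eq_abs]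
  exact (hτ i).le
end
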